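/- arXiv:1907.04720 — 2 statements merged into one kernel-verified Lean document; each statement's English description precedes it below -/
import Mathlib

section
/- The map Z : ℝ³ → ℝ³ is continuous. -/
/-- Explicit vector in ℝ³ (with the Euclidean norm). -/
def vec3 (a b c : ℝ) : EuclideanSpace ℝ (Fin 3) := WithLp.toLp 2 ![a, b, c]

/-- The 4-periodic sawtooth: h(t) = t on [-1,1], h(t) = 2 - t on [1,3]. -/
noncomputable def h (t : ℝ) : ℝ := 1 - |4 * Int.fract ((t + 1) / 4) - 2|

/-- The sign function ε(t) = (-1)^⌊(t+1)/2⌋. -/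
noncomputable def eps (t : ℝ) : ℝ := (-1 : ℝ) ^ ⌊(t + 1) / 2⌋

/-- The Zorich-type map Z : ℝ³ → ℝ³. -/
noncomputable def Z (x : EuclideanSpace ℝ (Fin 3)) : EuclideanSpace ℝ (Fin 3) :=
  Real.exp (x 2) •
    vec3 (h (x 0)) (h (x 1)) (eps (x 0) * eps (x 1) * (1 - max |h (x 0)| |h (x 1)|))

/-- Rotation by π about the vertical line {(u,v,t) : t ∈ ℝ}. -/
noncomputable def Rot (u v : ℝ) (x : EuclideanSpace ℝ (Fin 3)) : EuclideanSpace ℝ (Fin 3) :=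
  vec3 (2 * u - x 0) (2 * v - x 1) (x 2)

/-!
The factor ε(x₁)ε(x₂) only looks discontinuous. The sawtooth satisfies h(t + 1) = ε(t)(1 - |h t|),
so with p = h(x₁ + 1) and q = h(x₂ + 1) the third coordinate of Z / exp x₃ is
sign(pq) min(|p|, |q|) = (|p + q| - |p - q|) / 2, which is visibly continuous.
-/

open Set

lemma min_eq_abs_add_sub_abs_sub {a b : ℝ} (ha : 0 ≤ a) (hb : 0 ≤ b) :
    min a b = (|a + b| - |a - b|) / 2 := by
  rw [abs_of_nonneg (add_nonneg ha hb)]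
  rcases le_total a b with hab | hab
  · rw [min_eq_left hab, abs_of_nonpos (sub_nonpos.2 hab)]; ring
  · rw [min_eq_right hab, abs_of_nonneg (sub_nonneg.2 hab)]; ring

lemma mul_mul_min_eq_abs_add_sub_abs_sub {a b e f : ℝ} (ha : 0 ≤ a) (hb : 0 ≤ b)
    (he : e = 1 ∨ e = -1) (hf : f = 1 ∨ f = -1) :
    e * f * min a b = (|e * a + f * b| - |e * a - f * b|) / 2 := by
  rw [min_eq_abs_add_sub_abs_sub ha hb]
  rcases he with rfl | rfl <;> rcases hf with rfl | rfl <;>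
    simp only [one_mul, neg_one_mul, ← sub_eq_add_neg, sub_neg_eq_add, neg_add_eq_sub, ← neg_add',
      abs_neg, abs_sub_comm b a] <;>
    ring

@[fun_prop]
lemma Continuous.vec3 {X : Type*} [TopologicalSpace X] {f g k : X → ℝ} (hf : Continuous f)
    (hg : Continuous g) (hk : Continuous k) : Continuous fun x => vec3 (f x) (g x) (k x) :=
  (PiLp.continuous_toLp 2 _).comp <| continuous_pi fun i => by fin_cases i <;> assumption

@[fun_prop]
lemma continuous_h : Continuous h := by
  have hsaw : ContinuousOn (fun s : ℝ => 1 - |4 * s - 2|) (Icc 0 1) := by fun_prop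
  exact (hsaw.comp_fract'' (by norm_num)).comp (by fun_prop : Continuous fun t : ℝ => (t + 1) / 4)

lemma abs_h_le_one (t : ℝ) : |h t| ≤ 1 := by
  have h0 := Int.fract_nonneg ((t + 1) / 4)
  have h1 := Int.fract_lt_one ((t + 1) / 4)
  rw [h, abs_le]
  constructor <;> cases abs_cases (4 * Int.fract ((t + 1) / 4) - 2) <;> linarith

lemma h_add_four (t : ℝ) : h (t + 4) = h t := by
  rw [h, h, show (t + 4 + 1) / 4 = (t + 1) / 4 + 1 by ring, Int.fract_add_one]

lemma eps_add_four (t : ℝ) : eps (t + 4) = eps t := by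
  rw [eps, eps, show (t + 4 + 1) / 2 = (t + 1) / 2 + (2 : ℤ) by push_cast; ring,
    Int.floor_add_intCast, zpow_add₀ (by norm_num)]
  norm_num

lemma h_eq_one_sub_abs {t : ℝ} (ht : t ∈ Ico (-1) 3) : h t = 1 - |t - 1| := by
  rw [h, Int.fract_eq_self.2 ⟨by linarith [ht.1], by linarith [ht.2]⟩]
  ring_nf

lemma eps_eq_one {t : ℝ} (ht : t ∈ Ico (-1) 1) : eps t = 1 := by
  rw [eps, Int.floor_eq_zero_iff.2 ⟨by linarith [ht.1], by linarith [ht.2]⟩, zpow_zero]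

lemma eps_eq_neg_one {t : ℝ} (ht : t ∈ Ico 1 3) : eps t = -1 := by
  have hfloor : ⌊(t + 1) / 2⌋ = 1 :=
    Int.floor_eq_iff.2 ⟨by push_cast; linarith [ht.1], by push_cast; linarith [ht.2]⟩
  rw [eps, hfloor, zpow_one]

lemma eps_eq_one_or_neg_one (t : ℝ) : eps t = 1 ∨ eps t = -1 :=
  (Int.even_or_odd _).imp Even.neg_one_zpow Odd.neg_one_zpow

lemma h_add_one (t : ℝ) : h (t + 1) = eps t * (1 - |h t|) := by
  have hper : Function.Periodic (fun t => h (t + 1) - eps t * (1 - |h t|)) 4 := fun t => by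
    simp only [add_right_comm t 4 1, h_add_four, eps_add_four]
  obtain ⟨s, ⟨hs₁, hs₂⟩, hts⟩ := hper.exists_mem_Ico (by norm_num) t (-1)
  rw [← sub_eq_zero]
  refine hts.trans (sub_eq_zero.2 ?_)
  norm_num at hs₂
  rw [h_eq_one_sub_abs ⟨hs₁, hs₂⟩]
  rcases lt_or_ge s 1 with hs | hs
  · rw [eps_eq_one ⟨hs₁, hs⟩, h_eq_one_sub_abs ⟨by linarith, by linarith⟩,
      abs_of_neg (by linarith : s - 1 < 0)]
    ring_nf
  rw [eps_eq_neg_one ⟨hs, hs₂⟩, abs_of_nonneg (by linarith : 0 ≤ s - 1)]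
  rcases lt_or_ge s 2 with hs' | hs'
  · rw [h_eq_one_sub_abs ⟨by linarith, by linarith⟩, add_sub_cancel_right,
      abs_of_nonneg (by linarith : 0 ≤ s), abs_of_pos (by linarith : 0 < 1 - (s - 1))]
    ring
  · rw [show s + 1 = s - 3 + 4 by ring, h_add_four, h_eq_one_sub_abs ⟨by linarith, by linarith⟩,
      abs_of_neg (by linarith : s - 3 - 1 < 0), abs_of_nonpos (by linarith : 1 - (s - 1) ≤ 0)]
    ring

lemma eps_mul_eps_mul_one_sub_max (x y : ℝ) :
    eps x * eps y * (1 - max |h x| |h y|) =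
      (|h (x + 1) + h (y + 1)| - |h (x + 1) - h (y + 1)|) / 2 := by
  rw [← min_sub_sub_left, h_add_one, h_add_one]
  exact mul_mul_min_eq_abs_add_sub_abs_sub (sub_nonneg.2 (abs_h_le_one x))
    (sub_nonneg.2 (abs_h_le_one y)) (eps_eq_one_or_neg_one x) (eps_eq_one_or_neg_one y)

/-- The map Z : ℝ³ → ℝ³ is continuous. -/
theorem zorich_continuous : Continuous Z := by
  have hZ : Z = fun x => Real.exp (x 2) • vec3 (h (x 0)) (h (x 1))
      ((|h (x 0 + 1) + h (x 1 + 1)| - |h (x 0 + 1) - h (x 1 + 1)|) / 2) := by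
    funext x
    rw [Z, eps_mul_eps_mul_one_sub_max]
  rw [hZ]
  fun_prop
end

section
/- The image of the closed beam [-1,1] × [-1,1] × ℝ under Z is exactly the closed upper half-space minus the origin: Z([-1,1]² × ℝ) = {(y₁,y₂,y₃) ∈ ℝ³ : y₃ ≥ 0} \ {0}. -/
/-!
On the beam, `h` is the identity and the signs `ε` can only be `-1` on the faces `x₁ = 1`
or `x₂ = 1`, where the factor `1 - max (|x₁|, |x₂|)` vanishes; hence
`Z x = exp x₃ · (x₁, x₂, 1 - max (|x₁|, |x₂|))`. The vectors `(x₁, x₂, 1 - max (|x₁|, |x₂|))`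
form the pyramid `{y : y₃ ≥ 0, max (|y₁|, |y₂|) + y₃ = 1}`, and every nonzero `y` of the
closed upper half-space is the multiple `s · (y / s)` of a point of that pyramid, with
`s = max (|y₁|, |y₂|) + y₃ > 0` and `s = exp (log s)`.
-/

open Real Set

lemma h_of_mem_Icc {t : ℝ} (ht : t ∈ Icc (-1 : ℝ) 1) : h t = t := by
  rw [h, Int.fract_eq_self.2 ⟨by linarith [ht.1], by linarith [ht.2]⟩,
    show 4 * ((t + 1) / 4) - 2 = t - 1 by ring, abs_of_nonpos (by linarith [ht.2])]
  ring

lemma eps_of_mem_Ico {t : ℝ} (ht : t ∈ Ico (-1 : ℝ) 1) : eps t = 1 := by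
  rw [eps, Int.floor_eq_zero_iff.2 ⟨by linarith [ht.1], by linarith [ht.2]⟩, zpow_zero]

lemma eps_mul_eps_mul_one_sub_max_s10 {a b : ℝ} (ha : a ∈ Icc (-1 : ℝ) 1)
    (hb : b ∈ Icc (-1 : ℝ) 1) :
    eps a * eps b * (1 - max |a| |b|) = 1 - max |a| |b| := by
  rcases (max_le (abs_le.2 ha) (abs_le.2 hb)).eq_or_lt with hmax | hmax
  · simp [hmax]
  · rw [max_lt_iff, abs_lt, abs_lt] at hmax
    rw [eps_of_mem_Ico ⟨ha.1, hmax.1.2⟩, eps_of_mem_Ico ⟨hb.1, hmax.2.2⟩, one_mul, one_mul]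

@[simp] lemma vec3_apply_zero (a b c : ℝ) : vec3 a b c 0 = a := rfl
@[simp] lemma vec3_apply_one (a b c : ℝ) : vec3 a b c 1 = b := rfl
@[simp] lemma vec3_apply_two (a b c : ℝ) : vec3 a b c 2 = c := rfl

lemma smul_vec3 (r a b c : ℝ) : r • vec3 a b c = vec3 (r * a) (r * b) (r * c) := by
  ext i; fin_cases i <;> rfl

lemma vec3_eq_zero_iff {a b c : ℝ} : vec3 a b c = 0 ↔ a = 0 ∧ b = 0 ∧ c = 0 := by
  refine ⟨fun h => ⟨congr($h 0), congr($h 1), congr($h 2)⟩, ?_⟩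
  rintro ⟨rfl, rfl, rfl⟩
  ext i; fin_cases i <;> rfl

lemma eq_vec3 (y : EuclideanSpace ℝ (Fin 3)) : y = vec3 (y 0) (y 1) (y 2) := by
  ext i; fin_cases i <;> rfl

lemma Z_of_mem_beam {x : EuclideanSpace ℝ (Fin 3)} (h0 : x 0 ∈ Icc (-1 : ℝ) 1)
    (h1 : x 1 ∈ Icc (-1 : ℝ) 1) :
    Z x = vec3 (exp (x 2) * x 0) (exp (x 2) * x 1) (exp (x 2) * (1 - max |x 0| |x 1|)) := by
  rw [Z, h_of_mem_Icc h0, h_of_mem_Icc h1, eps_mul_eps_mul_one_sub_max_s10 h0 h1, smul_vec3]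

lemma div_mem_Icc_of_abs_le {a s : ℝ} (hs : 0 < s) (ha : |a| ≤ s) :
    a / s ∈ Icc (-1 : ℝ) 1 :=
  abs_le.1 (by rwa [abs_div, abs_of_pos hs, div_le_one hs])

lemma max_abs_add_pos {y : EuclideanSpace ℝ (Fin 3)} (hy2 : 0 ≤ y 2) (hy : y ≠ 0) :
    0 < max |y 0| |y 1| + y 2 := by
  by_contra! hs
  have h0 : |y 0| ≤ 0 := by linarith [le_max_left |y 0| |y 1|]
  have h1 : |y 1| ≤ 0 := by linarith [le_max_right |y 0| |y 1|]
  exact hy ((eq_vec3 y).trans (vec3_eq_zero_iff.2 ⟨abs_nonpos_iff.1 h0, abs_nonpos_iff.1 h1,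
    by linarith [abs_nonneg (y 0), le_max_left |y 0| |y 1|]⟩))

lemma exists_mem_beam_Z_eq {y : EuclideanSpace ℝ (Fin 3)} (hy2 : 0 ≤ y 2) (hy : y ≠ 0) :
    ∃ x : EuclideanSpace ℝ (Fin 3),
      (x 0 ∈ Icc (-1 : ℝ) 1 ∧ x 1 ∈ Icc (-1 : ℝ) 1) ∧ Z x = y := by
  set s := max |y 0| |y 1| + y 2
  have hs : 0 < s := max_abs_add_pos hy2 hy
  have h0 : y 0 / s ∈ Icc (-1 : ℝ) 1 :=
    div_mem_Icc_of_abs_le hs (by linarith [le_max_left |y 0| |y 1|])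
  have h1 : y 1 / s ∈ Icc (-1 : ℝ) 1 :=
    div_mem_Icc_of_abs_le hs (by linarith [le_max_right |y 0| |y 1|])
  refine ⟨vec3 (y 0 / s) (y 1 / s) (log s), ⟨h0, h1⟩, ?_⟩
  rw [Z_of_mem_beam h0 h1, eq_vec3 y]
  simp only [vec3_apply_zero, vec3_apply_one, vec3_apply_two, exp_log hs, abs_div,
    abs_of_pos hs, max_div_div_right hs.le]
  congr 1 <;> field_simp
  ring

/-- The image of the closed beam [-1,1]² × ℝ under Z is exactly the closed
    upper half-space minus the origin. -/
theorem zorich_image_beam :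
    Z '' {x : EuclideanSpace ℝ (Fin 3) |
        x 0 ∈ Set.Icc (-1 : ℝ) 1 ∧ x 1 ∈ Set.Icc (-1 : ℝ) 1} =
      {y : EuclideanSpace ℝ (Fin 3) | 0 ≤ y 2} \ {0} := by
  ext y
  constructor
  · rintro ⟨x, ⟨h0, h1⟩, rfl⟩
    have hmax : max |x 0| |x 1| ≤ 1 := max_le (abs_le.2 h0) (abs_le.2 h1)
    rw [Z_of_mem_beam h0 h1]
    refine ⟨mul_nonneg (exp_pos _).le (sub_nonneg.2 hmax), fun hzero => ?_⟩
    obtain ⟨hx0, hx1, hx2⟩ := vec3_eq_zero_iff.1 hzero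
    rw [mul_eq_zero_iff_left (exp_pos _).ne'] at hx0 hx1
    simp [hx0, hx1, (exp_pos _).ne'] at hx2
  · rintro ⟨hy2, hy⟩
    exact exists_mem_beam_Z_eq hy2 hy
end
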